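/- arXiv:1908.05406 — 3 statements merged into one kernel-verified Lean document; each statement's English description precedes it below -/
import Mathlib

section
/- Let X be a real Hilbert space, U a closed linear subspace of X, and let C₁, C₂ be nonempty closed convex subsets of X. Set S₁ = U − C₁, S₂ = U^⊥ − C₂, v_D = P_{closure S₁}(0), and v_R = P_{closure S₂}(0). Then: (a) v_D ∈ U^⊥ and v_R ∈ U; (b) v_D + v_R ∈ (closure S₁) ∩ (closure S₂); and (c) v_D + v_R = P_{(closure S₁) ∩ (closure S₂)}(0), i.e., v_D + v_R is the minimal-norm element of (closure S₁) ∩ (closure S₂). -/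
open scoped RealInnerProductSpace Pointwise
open Filter Topology

noncomputable section

variable {X : Type*}

section Defs
variable [NormedAddCommGroup X] [InnerProductSpace ℝ X]

/-- `p` is the metric projection of `x` onto `S`: `p ∈ S` and
`⟪s − p, x − p⟫ ≤ 0` for all `s ∈ S`. -/
def IsMetricProj (S : Set X) (x p : X) : Prop :=
  p ∈ S ∧ ∀ s ∈ S, ⟪s - p, x - p⟫ ≤ (0 : ℝ)

/-- a function `X → (−∞,+∞]` is proper: never `−∞` and somewhere finite. -/
def EProper (g : X → EReal) : Prop :=
  (∀ x, g x ≠ ⊥) ∧ ∃ x, g x ≠ ⊤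

/-- convexity for extended-real-valued functions. -/
def EConvexOn (g : X → EReal) : Prop :=
  ∀ x y : X, ∀ a b : ℝ, 0 ≤ a → 0 ≤ b → a + b = 1 →
    g (a • x + b • y) ≤ (a : EReal) * g x + (b : EReal) * g y

/-- the convex subdifferential `∂g(x)`. -/
def ESubdiff (g : X → EReal) (x : X) : Set X :=
  {xs | ∀ z : X, g x + ((⟪z - x, xs⟫ : ℝ) : EReal) ≤ g z}

/-- the Fenchel conjugate `g*`. -/
def EConj (g : X → EReal) (xs : X) : EReal :=
  ⨆ x : X, ((⟪x, xs⟫ : ℝ) : EReal) - g x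

/-- `prox` is the proximal mapping of `g`: `prox x` minimizes
`y ↦ g y + ‖y − x‖²/2`. -/
def IsProx (g : X → EReal) (prox : X → X) : Prop :=
  ∀ x y : X,
    g (prox x) + ((‖prox x - x‖ ^ 2 / 2 : ℝ) : EReal) ≤
      g y + ((‖y - x‖ ^ 2 / 2 : ℝ) : EReal)

/-- the normal cone operator of a closed linear subspace:
`N_U(x) = U^⊥` if `x ∈ U`, and `∅` otherwise. -/
def normalCone (U : Submodule ℝ X) (x : X) : Set X :=
  {u | x ∈ U ∧ u ∈ Uᗮ}

/-- `c` is a weak cluster point of the sequence `s`, i.e. the weak limit of a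
subsequence of `s`. -/
def IsWeakClusterPt (s : ℕ → X) (c : X) : Prop :=
  ∃ φ : ℕ → ℕ, StrictMono φ ∧
    ∀ w : X, Tendsto (fun k => (⟪s (φ k), w⟫ : ℝ)) atTop (𝓝 ⟪c, w⟫)

end Defs

/-!
A set of the form `closure (V - C)` with `V` a subspace is invariant under translation by `V`,
so the variational inequality characterising the projection of `0` onto it, tested at `p ± v`,
forces the projection to be orthogonal to `V`. Hence `v_D ⟂ U` and `v_R ⟂ Uᗮ`, i.e. `v_R ∈ U`;
the same invariance puts `v_D + v_R` in both sets, and because `⟪v_D, v_R⟫ = 0` the variational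
inequality for `v_D + v_R` on the intersection is the sum of those for `v_D` and `v_R`.
-/

theorem add_mem_closure_coe_sub {G : Type*} [AddCommGroup G] [TopologicalSpace G]
    [ContinuousAdd G] (V : AddSubgroup G) (C : Set G) {s v : G}
    (hs : s ∈ closure ((V : Set G) - C)) (hv : v ∈ V) :
    s + v ∈ closure ((V : Set G) - C) := by
  refine map_mem_closure (f := (· + v)) (continuous_add_const v) hs ?_
  rintro _ ⟨u, hu, c, hc, rfl⟩
  exact ⟨u + v, V.add_mem hu hv, c, hc, (sub_add_eq_add_sub u c v).symm⟩

section MetricProj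

variable [NormedAddCommGroup X] [InnerProductSpace ℝ X]

theorem IsMetricProj.sub_mem_orthogonal {S : Set X} {x p : X} (V : Submodule ℝ X)
    (hS : ∀ s ∈ S, ∀ v ∈ V, s + v ∈ S) (hp : IsMetricProj S x p) : x - p ∈ Vᗮ := by
  refine (Submodule.mem_orthogonal V _).2 fun v hv => le_antisymm ?_ ?_
  · simpa using hp.2 _ (hS p hp.1 v hv)
  · simpa [inner_neg_left] using hp.2 _ (hS p hp.1 (-v) (V.neg_mem hv))

theorem IsMetricProj.norm_sub_le {S : Set X} {x p : X} (hp : IsMetricProj S x p)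
    {s : X} (hs : s ∈ S) : ‖x - p‖ ≤ ‖x - s‖ := by
  have hsq : ‖x - s‖ ^ 2 = ‖x - p‖ ^ 2 - 2 * ⟪x - p, s - p⟫ + ‖s - p‖ ^ 2 := by
    rw [← norm_sub_sq_real, sub_sub_sub_cancel_right]
  have hvar : ⟪x - p, s - p⟫ ≤ 0 := real_inner_comm (s - p) (x - p) ▸ hp.2 s hs
  refine (sq_le_sq₀ (norm_nonneg _) (norm_nonneg _)).1 ?_
  nlinarith [sq_nonneg ‖s - p‖]

theorem IsMetricProj.inter_zero_add {S₁ S₂ : Set X} {p₁ p₂ : X}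
    (h₁ : IsMetricProj S₁ 0 p₁) (h₂ : IsMetricProj S₂ 0 p₂) (horth : ⟪p₁, p₂⟫ = 0)
    (hmem : p₁ + p₂ ∈ S₁ ∩ S₂) : IsMetricProj (S₁ ∩ S₂) 0 (p₁ + p₂) := by
  refine ⟨hmem, fun s hs => ?_⟩
  have hsplit : ⟪s - (p₁ + p₂), 0 - (p₁ + p₂)⟫ =
      ⟪s - p₁, 0 - p₁⟫ + ⟪s - p₂, 0 - p₂⟫ + 2 * ⟪p₁, p₂⟫ := by
    simp only [zero_sub, inner_neg_right, inner_sub_left, inner_add_left, inner_add_right,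
      real_inner_comm p₁ p₂]
    ring
  rw [hsplit, horth]
  linarith [h₁.2 s hs.1, h₂.2 s hs.2]

end MetricProj

theorem vD_add_vR_is_projection_general
    [NormedAddCommGroup X] [InnerProductSpace ℝ X] [CompleteSpace X]
    (U : Submodule ℝ X) (hUclosed : IsClosed (U : Set X))
    (C₁ : Set X)
    (C₂ : Set X)
    (vD vR : X)
    (hvD : IsMetricProj (closure ((U : Set X) - C₁)) 0 vD)
    (hvR : IsMetricProj (closure ((Uᗮ : Set X) - C₂)) 0 vR) :
    vD ∈ Uᗮ ∧ vR ∈ U ∧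
    vD + vR ∈ closure ((U : Set X) - C₁) ∩ closure ((Uᗮ : Set X) - C₂) ∧
    IsMetricProj (closure ((U : Set X) - C₁) ∩ closure ((Uᗮ : Set X) - C₂)) 0 (vD + vR) ∧
    (∀ w ∈ closure ((U : Set X) - C₁) ∩ closure ((Uᗮ : Set X) - C₂),
      ‖vD + vR‖ ≤ ‖w‖) := by
  have hD : vD ∈ Uᗮ := by
    simpa using Uᗮ.neg_mem <| hvD.sub_mem_orthogonal U fun s hs v hv =>
      add_mem_closure_coe_sub U.toAddSubgroup C₁ hs hv
  have hR : vR ∈ U := by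
    have h := Uᗮᗮ.neg_mem <| hvR.sub_mem_orthogonal Uᗮ fun s hs v hv =>
      add_mem_closure_coe_sub Uᗮ.toAddSubgroup C₂ hs hv
    rwa [zero_sub, neg_neg, Submodule.orthogonal_orthogonal_eq_closure,
      hUclosed.submodule_topologicalClosure_eq] at h
  have hmem : vD + vR ∈ closure ((U : Set X) - C₁) ∩ closure ((Uᗮ : Set X) - C₂) :=
    ⟨add_mem_closure_coe_sub U.toAddSubgroup C₁ hvD.1 hR,
      add_comm vR vD ▸ add_mem_closure_coe_sub Uᗮ.toAddSubgroup C₂ hvR.1 hD⟩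
  have hproj := hvD.inter_zero_add hvR (Submodule.inner_left_of_mem_orthogonal hR hD) hmem
  refine ⟨hD, hR, hmem, hproj, fun w hw => ?_⟩
  simpa only [zero_sub, norm_neg] using hproj.norm_sub_le hw

/-- With `S₁ = U − C₁`, `S₂ = U^⊥ − C₂`, `v_D = P_{closure S₁} 0` and
`v_R = P_{closure S₂} 0`, one has `v_D ∈ U^⊥`, `v_R ∈ U`,
`v_D + v_R ∈ closure S₁ ∩ closure S₂`, and `v_D + v_R = P_{closure S₁ ∩ closure S₂} 0`,
i.e. `v_D + v_R` is the minimal-norm element of `closure S₁ ∩ closure S₂`. -/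
theorem vD_add_vR_is_projection
    [NormedAddCommGroup X] [InnerProductSpace ℝ X] [CompleteSpace X]
    (U : Submodule ℝ X) (hUclosed : IsClosed (U : Set X))
    (C₁ : Set X) (hC₁ne : C₁.Nonempty) (hC₁closed : IsClosed C₁) (hC₁conv : Convex ℝ C₁)
    (C₂ : Set X) (hC₂ne : C₂.Nonempty) (hC₂closed : IsClosed C₂) (hC₂conv : Convex ℝ C₂)
    (vD vR : X)
    (hvD : IsMetricProj (closure ((U : Set X) - C₁)) 0 vD)
    (hvR : IsMetricProj (closure ((Uᗮ : Set X) - C₂)) 0 vR) :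
    vD ∈ Uᗮ ∧ vR ∈ U ∧
    vD + vR ∈ closure ((U : Set X) - C₁) ∩ closure ((Uᗮ : Set X) - C₂) ∧
    IsMetricProj (closure ((U : Set X) - C₁) ∩ closure ((Uᗮ : Set X) - C₂)) 0 (vD + vR) ∧
    (∀ w ∈ closure ((U : Set X) - C₁) ∩ closure ((Uᗮ : Set X) - C₂),
      ‖vD + vR‖ ≤ ‖w‖) :=
  vD_add_vR_is_projection_general U hUclosed C₁ C₂ vD vR hvD hvR
end
end

section
/- Let X be a real Hilbert space, U a closed linear subspace of X, and W a nonempty closed convex subset of X. Set v = P_{closure(U − W)}(0) (which belongs to U^⊥). Define Z = {x ∈ X : v ∈ N_U(x) + N_W(x − v)}, where N_W(y) = {x* : ⟪w − y, x*⟫ ≤ 0 for all w ∈ W} if y ∈ W and ∅ otherwise. Then Z = U ∩ (v + W). -/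
open scoped RealInnerProductSpace Pointwise
open Filter Topology

noncomputable section

variable {X : Type*}

/-- the normal cone of a convex set `W`:
`N_W(y) = {x* : ⟪w − y, x*⟫ ≤ 0 for all w ∈ W}` if `y ∈ W`, and `∅` otherwise. -/
def convexNormalCone [NormedAddCommGroup X] [InnerProductSpace ℝ X]
    (W : Set X) (y : X) : Set X :=
  {xs | y ∈ W ∧ ∀ w ∈ W, ⟪w - y, xs⟫ ≤ (0 : ℝ)}

section
variable [NormedAddCommGroup X] [InnerProductSpace ℝ X]

theorem IsMetricProj.inner_nonneg {S : Set X} {v u : X} (hv : IsMetricProj S 0 v)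
    (hu : v + u ∈ S) : 0 ≤ ⟪u, v⟫ := by
  have h := hv.2 _ hu
  rw [add_sub_cancel_left, zero_sub, inner_neg_right] at h
  linarith

theorem add_mem_closure_submodule_sub {U : Submodule ℝ X} {W : Set X} {x u : X}
    (hx : x ∈ closure ((U : Set X) - W)) (hu : u ∈ U) :
    x + u ∈ closure ((U : Set X) - W) := by
  have hmaps : Set.MapsTo (fun y => y + u) ((U : Set X) - W) ((U : Set X) - W) := by
    rintro _ ⟨a, ha, b, hb, rfl⟩
    exact ⟨a + u, U.add_mem ha hu, b, hb, (sub_add_eq_add_sub a b u).symm⟩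
  exact map_mem_closure (f := fun y => y + u) (continuous_add_const u) hx hmaps

/-- `U − W` is invariant under translation by `U`, so testing the projection inequality at
`v ± u` forces `⟪u, v⟫ = 0`. -/
theorem IsMetricProj.mem_orthogonal {U : Submodule ℝ X} {W : Set X} {v : X}
    (hv : IsMetricProj (closure ((U : Set X) - W)) 0 v) : v ∈ Uᗮ := by
  rw [Submodule.mem_orthogonal]
  intro u hu
  have hpos := hv.inner_nonneg (add_mem_closure_submodule_sub hv.1 hu)
  have hneg := hv.inner_nonneg (add_mem_closure_submodule_sub hv.1 (U.neg_mem hu))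
  rw [inner_neg_left] at hneg
  linarith

theorem zero_mem_convexNormalCone {W : Set X} {y : X} (hy : y ∈ W) :
    0 ∈ convexNormalCone W y :=
  ⟨hy, fun _ _ => (inner_zero_right _).le⟩

end

theorem normal_solutions_feasibility_general
    [NormedAddCommGroup X] [InnerProductSpace ℝ X]
    (U : Submodule ℝ X)
    (W : Set X)
    (v : X) (hv : IsMetricProj (closure ((U : Set X) - W)) 0 v)
    (Z : Set X)
    (hZ : Z = {x | ∃ a b : X,
      a ∈ normalCone U x ∧ b ∈ convexNormalCone W (x - v) ∧ v = a + b}) :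
    v ∈ Uᗮ ∧ Z = {x | x ∈ U ∧ x - v ∈ W} := by
  have hvU : v ∈ Uᗮ := hv.mem_orthogonal
  refine ⟨hvU, hZ ▸ Set.ext fun x => ⟨?_, ?_⟩⟩
  · rintro ⟨-, -, ⟨hxU, -⟩, ⟨hxvW, -⟩, -⟩
    exact ⟨hxU, hxvW⟩
  · rintro ⟨hxU, hxvW⟩
    exact ⟨v, 0, ⟨hxU, hvU⟩, zero_mem_convexNormalCone hxvW, (add_zero v).symm⟩

/-- **linear-convex feasibility.** With `g = ι_W`, so that
`∂g = N_W`, and `v = P_{closure (U − W)} 0` (which belongs to `U^⊥`),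
the set `Z = {x : v ∈ N_U(x) + N_W(x − v)}` equals `U ∩ (v + W)`. -/
theorem normal_solutions_feasibility
    [NormedAddCommGroup X] [InnerProductSpace ℝ X] [CompleteSpace X]
    (U : Submodule ℝ X) (hUclosed : IsClosed (U : Set X))
    (W : Set X) (hWne : W.Nonempty) (hWclosed : IsClosed W) (hWconv : Convex ℝ W)
    (v : X) (hv : IsMetricProj (closure ((U : Set X) - W)) 0 v)
    (Z : Set X)
    (hZ : Z = {x | ∃ a b : X,
      a ∈ normalCone U x ∧ b ∈ convexNormalCone W (x - v) ∧ v = a + b}) :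
    v ∈ Uᗮ ∧ Z = {x | x ∈ U ∧ x - v ∈ W} :=
  normal_solutions_feasibility_general U W v hv Z hZ
end
end

section
/- Let X be a real Hilbert space, U a closed linear subspace, g : X → (−∞,+∞] proper lower semicontinuous convex, T = Id − P_U + Prox_g ∘ R_U, and v = P_{closure(ran(Id−T))}(0); assume v ∈ U^⊥ and that F = {x : x = T(x + v)} is nonempty. Let x ∈ X. Then: (i) P_U T^n x − Prox_g(R_U T^n x) = T^n x − T^{n+1} x → v (strongly) as n → ∞; (ii) P_U T^n x − P_U T^{n+1} x → 0; (iii) −P_{U^⊥} Prox_g(R_U T^n x) = P_{U^⊥} T^n x − P_{U^⊥} T^{n+1} x → v; (iv) every weak cluster point of (P_U T^n x) lies in U ∩ (v + closure(dom g)); (v) the sequences (nv + T^n x), (P_U T^n x), and (Prox_g(R_U T^n x)) are bounded. -/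
/-!
The Douglas–Rachford operator `T` is firmly nonexpansive because `Prox_g` is: a minimizer `p`
of `g + ‖· - x‖² / 2` satisfies `x - p ∈ ∂g(p)`, and `∂g` is monotone. For `z ∈ F` the point
`y = z + v` satisfies `T y = y - v`; firm nonexpansiveness at `Tⁿ x` and `y`, together with
`⟪w - v, v⟫ ≥ 0` for every displacement `w = u - T u` (the variational characterisation of `v`),
shows that `‖Tⁿ x + n v - y‖²` drops by at least `‖Tⁿ x - Tⁿ⁺¹ x - v‖²` at every step. Hence the
displacements converge to `v` and `n v + Tⁿ x` stays bounded. Everything else follows by applying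
`P_U` (which kills `v`), and weak cluster points are located because closed convex sets are weakly
sequentially closed.
-/

open scoped RealInnerProductSpace Pointwise
open Filter Topology

noncomputable section

variable {X : Type*}

theorem le_of_forall_le_add_mul {a b c : ℝ} (h : ∀ t : ℝ, 0 < t → t < 1 → a ≤ b + t * c) :
    a ≤ b := by
  have hlim : Tendsto (fun t : ℝ => b + t * c) (𝓝[>] 0) (𝓝 b) := by
    refine ((by fun_prop : Continuous fun t : ℝ => b + t * c).tendsto' 0 b ?_).mono_left
      nhdsWithin_le_nhds
    simp
  refine ge_of_tendsto hlim ?_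
  filter_upwards [Ioo_mem_nhdsGT one_pos] with t ht using h t ht.1 ht.2

section ConvexAnalysis

variable [NormedAddCommGroup X] {g : X → EReal} {prox : X → X}

theorem IsProx.apply_ne_top (h : IsProx g prox) (hg : EProper g) (x : X) : g (prox x) ≠ ⊤ := by
  obtain ⟨x₀, hx₀⟩ := hg.2
  intro htop
  have hle := h x x₀
  rw [htop, EReal.top_add_coe, top_le_iff] at hle
  exact (EReal.add_lt_top hx₀ (EReal.coe_ne_top _)).ne hle

variable [InnerProductSpace ℝ X]

def FirmlyNonexpansive (T : X → X) : Prop :=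
  ∀ a b, ‖T a - T b‖ ^ 2 ≤ ⟪T a - T b, a - b⟫

theorem EConvexOn.convex_dom (hc : EConvexOn g) (hbot : ∀ x, g x ≠ ⊥) :
    Convex ℝ {x | g x ≠ ⊤} := by
  intro a ha b hb s t hs ht hst
  have hle := hc a b s t hs ht hst
  rw [← EReal.coe_toReal ha (hbot a), ← EReal.coe_toReal hb (hbot b), ← EReal.coe_mul,
    ← EReal.coe_mul, ← EReal.coe_add] at hle
  exact ne_top_of_le_ne_top (EReal.coe_ne_top _) hle

theorem sub_mem_eSubdiff_of_forall_le (hbot : ∀ x, g x ≠ ⊥) (hc : EConvexOn g) {x p : X}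
    (hp : g p ≠ ⊤)
    (hmin : ∀ y, g p + ((‖p - x‖ ^ 2 / 2 : ℝ) : EReal) ≤ g y + ((‖y - x‖ ^ 2 / 2 : ℝ) : EReal)) :
    x - p ∈ ESubdiff g p := by
  intro z
  by_cases hz : g z = ⊤
  · rw [hz]; exact le_top
  obtain ⟨r, hr⟩ : ∃ r : ℝ, g p = r := ⟨_, (EReal.coe_toReal hp (hbot p)).symm⟩
  obtain ⟨s, hs⟩ : ∃ s : ℝ, g z = s := ⟨_, (EReal.coe_toReal hz (hbot z)).symm⟩
  rw [hr, hs, ← EReal.coe_add, EReal.coe_le_coe_iff]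
  refine le_of_forall_le_add_mul (c := ‖z - p‖ ^ 2 / 2) fun t ht ht1 => ?_
  -- compare `p` with the competitor `(1 - t) • p + t • z`, then divide by `t`
  have hconv := hc p z (1 - t) t (by linarith) ht.le (by ring)
  rw [hr, hs, ← EReal.coe_mul, ← EReal.coe_mul, ← EReal.coe_add] at hconv
  have hchain := (hmin _).trans (add_le_add hconv le_rfl)
  rw [hr, ← EReal.coe_add, ← EReal.coe_add, EReal.coe_le_coe_iff,
    show (1 - t) • p + t • z - x = (p - x) + t • (z - p) by rw [sub_smul, one_smul, smul_sub]; abel,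
    norm_add_sq_real, real_inner_smul_right, norm_smul, Real.norm_eq_abs, mul_pow, sq_abs]
    at hchain
  have hinner : ⟪z - p, x - p⟫ = -⟪p - x, z - p⟫ := by
    rw [real_inner_comm, ← inner_neg_left, neg_sub]
  rw [hinner]
  nlinarith

theorem IsProx.sub_mem_eSubdiff (h : IsProx g prox) (hg : EProper g) (hc : EConvexOn g) (x : X) :
    x - prox x ∈ ESubdiff g (prox x) :=
  sub_mem_eSubdiff_of_forall_le hg.1 hc (h.apply_ne_top hg x) (h x)

theorem inner_sub_nonneg_of_mem_eSubdiff (hbot : ∀ x, g x ≠ ⊥) {p q a b : X} (hp : g p ≠ ⊤)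
    (hq : g q ≠ ⊤) (ha : a ∈ ESubdiff g p) (hb : b ∈ ESubdiff g q) : 0 ≤ ⟪p - q, a - b⟫ := by
  have hpq := ha q
  have hqp := hb p
  rw [← EReal.coe_toReal hp (hbot p), ← EReal.coe_toReal hq (hbot q), ← EReal.coe_add,
    EReal.coe_le_coe_iff] at hpq hqp
  have hsym : ⟪q - p, a⟫ = -⟪p - q, a⟫ := by rw [← inner_neg_left, neg_sub]
  rw [inner_sub_right]
  linarith

theorem IsProx.firmlyNonexpansive (h : IsProx g prox) (hg : EProper g) (hc : EConvexOn g) :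
    FirmlyNonexpansive prox := by
  intro a b
  have hmono := inner_sub_nonneg_of_mem_eSubdiff hg.1 (h.apply_ne_top hg a)
    (h.apply_ne_top hg b) (h.sub_mem_eSubdiff hg hc a) (h.sub_mem_eSubdiff hg hc b)
  rw [show a - prox a - (b - prox b) = (a - b) - (prox a - prox b) by abel, inner_sub_right,
    real_inner_self_eq_norm_sq] at hmono
  linarith

end ConvexAnalysis

section DouglasRachford

variable [NormedAddCommGroup X] [InnerProductSpace ℝ X] (U : Submodule ℝ X)
  [U.HasOrthogonalProjection] {J : X → X}

def douglasRachford (J : X → X) (z : X) : X :=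
  z - U.starProjection z + J (2 • U.starProjection z - z)

theorem Submodule.real_inner_starProjection_self (u : X) :
    ⟪U.starProjection u, u⟫ = ‖U.starProjection u‖ ^ 2 := by
  simpa using U.re_inner_starProjection_eq_normSq u

theorem Submodule.norm_starProjection_le_norm_smul_add {v : X} (hv : v ∈ Uᗮ) (a : ℝ) (w : X) :
    ‖U.starProjection w‖ ≤ ‖a • v + w‖ := by
  calc ‖U.starProjection w‖ = ‖U.starProjection (a • v + w)‖ := by
        rw [map_add, map_smul, U.starProjection_apply_eq_zero_iff.mpr hv, smul_zero, zero_add]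
    _ ≤ ‖a • v + w‖ := U.norm_starProjection_apply_le _

theorem firmlyNonexpansive_douglasRachford (hJ : FirmlyNonexpansive J) :
    FirmlyNonexpansive (douglasRachford U J) := by
  intro a b
  set P := U.starProjection
  have hJab := hJ (2 • P a - a) (2 • P b - b)
  set s := J (2 • P a - a) - J (2 • P b - b)
  set u := a - b
  have hT : douglasRachford U J a - douglasRachford U J b = u - P u + s := by
    simp only [douglasRachford, u, s, P, map_sub]; abel
  have hR : 2 • P a - a - (2 • P b - b) = 2 • P u - u := by
    simp only [u, map_sub, smul_sub]; abel
  have hPu : ⟪P u, u⟫ = ‖P u‖ ^ 2 := U.real_inner_starProjection_self u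
  rw [hR, two_nsmul] at hJab
  rw [hT, ← real_inner_self_eq_norm_sq]
  simp only [inner_add_left, inner_add_right, inner_sub_left, inner_sub_right,
    real_inner_self_eq_norm_sq, real_inner_comm u (P u), real_inner_comm s] at hJab hPu ⊢
  linarith

theorem sub_douglasRachford (z : X) :
    z - douglasRachford U J z = U.starProjection z - J (2 • U.starProjection z - z) := by
  rw [douglasRachford]; abel

theorem sub_starProjection_sub_douglasRachford (z : X) :
    z - U.starProjection z - (douglasRachford U J z - U.starProjection (douglasRachford U J z)) =
      -(J (2 • U.starProjection z - z) - U.starProjection (J (2 • U.starProjection z - z))) := by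
  simp only [douglasRachford, map_add, map_sub,
    U.starProjection_eq_self_iff.mpr (U.starProjection_apply_mem z)]
  abel

end DouglasRachford

section Iteration

variable [NormedAddCommGroup X] [InnerProductSpace ℝ X] {T : X → X} {v y : X}

theorem IsMetricProj.inner_sub_nonneg {S : Set X} {s : X} (hv : IsMetricProj (closure S) 0 v)
    (hs : s ∈ S) : 0 ≤ ⟪s - v, v⟫ := by
  simpa [inner_neg_right] using hv.2 s (subset_closure hs)

theorem FirmlyNonexpansive.norm_sq_add_norm_sq_sub_le (hT : FirmlyNonexpansive T) (a b : X) :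
    ‖T a - T b‖ ^ 2 + ‖a - T a - (b - T b)‖ ^ 2 ≤ ‖a - b‖ ^ 2 := by
  rw [show a - T a - (b - T b) = (a - b) - (T a - T b) by abel,
    norm_sub_sq_real (a - b), real_inner_comm]
  linarith [hT a b]

theorem FirmlyNonexpansive.norm_sq_iterate_succ_add_le (hT : FirmlyNonexpansive T)
    (hv : ∀ z, 0 ≤ ⟪z - T z - v, v⟫) (hy : T y = y - v) (x : X) (n : ℕ) :
    ‖T^[n + 1] x + ((n + 1 : ℕ) : ℝ) • v - y‖ ^ 2 + ‖T^[n] x - T^[n + 1] x - v‖ ^ 2 ≤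
      ‖T^[n] x + (n : ℝ) • v - y‖ ^ 2 := by
  rw [Function.iterate_succ_apply']
  set a := T^[n] x
  have hfne := hT.norm_sq_add_norm_sq_sub_le a y
  rw [hy, sub_sub_cancel] at hfne
  have hva := hv a
  rw [show T a + ((n + 1 : ℕ) : ℝ) • v - y = (T a - (y - v)) + (n : ℝ) • v by
      push_cast; rw [add_smul, one_smul]; abel,
    show a + (n : ℝ) • v - y = (a - y) + (n : ℝ) • v by abel,
    show a - T a - v = (a - y) - (T a - (y - v)) by abel] at *
  rw [norm_add_sq_real, norm_add_sq_real, real_inner_smul_right, real_inner_smul_right]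
  rw [inner_sub_left] at hva
  linarith [mul_nonneg (Nat.cast_nonneg n : (0 : ℝ) ≤ n) hva]

theorem FirmlyNonexpansive.antitone_norm_iterate_add_smul_sub (hT : FirmlyNonexpansive T)
    (hv : ∀ z, 0 ≤ ⟪z - T z - v, v⟫) (hy : T y = y - v) (x : X) :
    Antitone fun n : ℕ => ‖T^[n] x + (n : ℝ) • v - y‖ ^ 2 :=
  antitone_nat_of_succ_le fun n =>
    le_of_add_le_of_nonneg_left (hT.norm_sq_iterate_succ_add_le hv hy x n) (sq_nonneg _)

theorem FirmlyNonexpansive.norm_smul_add_iterate_le (hT : FirmlyNonexpansive T)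
    (hv : ∀ z, 0 ≤ ⟪z - T z - v, v⟫) (hy : T y = y - v) (x : X) (n : ℕ) :
    ‖(n : ℝ) • v + T^[n] x‖ ≤ ‖x - y‖ + ‖y‖ := by
  have hn := hT.antitone_norm_iterate_add_smul_sub hv hy x (Nat.zero_le n)
  simp only [Function.iterate_zero_apply, Nat.cast_zero, zero_smul, add_zero] at hn
  rw [pow_le_pow_iff_left₀ (norm_nonneg _) (norm_nonneg _) two_ne_zero] at hn
  calc ‖(n : ℝ) • v + T^[n] x‖ ≤ ‖T^[n] x + (n : ℝ) • v - y‖ + ‖y‖ := by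
        rw [add_comm]; exact norm_le_norm_sub_add _ _
    _ ≤ ‖x - y‖ + ‖y‖ := by gcongr

theorem FirmlyNonexpansive.tendsto_iterate_sub_iterate_succ (hT : FirmlyNonexpansive T)
    (hv : ∀ z, 0 ≤ ⟪z - T z - v, v⟫) (hy : T y = y - v) (x : X) :
    Tendsto (fun n => T^[n] x - T^[n + 1] x) atTop (𝓝 v) := by
  set d : ℕ → ℝ := fun n => ‖T^[n] x + (n : ℝ) • v - y‖ ^ 2
  have hd : Tendsto d atTop (𝓝 (⨅ n, d n)) :=
    tendsto_atTop_ciInf (hT.antitone_norm_iterate_add_smul_sub hv hy x)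
      ⟨0, by rintro _ ⟨n, rfl⟩; positivity⟩
  have hgap : Tendsto (fun n => d n - d (n + 1)) atTop (𝓝 0) := by
    simpa using hd.sub (hd.comp (tendsto_add_atTop_nat 1))
  have hsq : Tendsto (fun n => ‖T^[n] x - T^[n + 1] x - v‖ ^ 2) atTop (𝓝 0) :=
    squeeze_zero (fun n => sq_nonneg _)
      (fun n => by linarith [hT.norm_sq_iterate_succ_add_le hv hy x n]) hgap
  rw [tendsto_iff_norm_sub_tendsto_zero]
  simpa [Real.sqrt_sq (norm_nonneg _)] using hsq.sqrt

end Iteration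

section WeakClusterPoints

variable [NormedAddCommGroup X] [InnerProductSpace ℝ X] {s t : ℕ → X} {c w : X}

theorem IsWeakClusterPt.sub_of_tendsto_sub (hc : IsWeakClusterPt s c)
    (hst : Tendsto (fun n => s n - t n) atTop (𝓝 w)) : IsWeakClusterPt t (c - w) := by
  obtain ⟨φ, hφ, hlim⟩ := hc
  refine ⟨φ, hφ, fun u => ?_⟩
  have hsub := (hlim u).sub ((hst.comp hφ.tendsto_atTop).inner (tendsto_const_nhds (x := u)))
  simpa [inner_sub_left] using hsub

theorem IsWeakClusterPt.mem_of_forall_mem [CompleteSpace X] {K : Set X} (hc : IsWeakClusterPt s c)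
    (hK : Convex ℝ K) (hKc : IsClosed K) (hs : ∀ n, s n ∈ K) : c ∈ K := by
  obtain ⟨φ, -, hlim⟩ := hc
  obtain ⟨p, hpK, hp⟩ :=
    exists_norm_eq_iInf_of_complete_convex ⟨s 0, hs 0⟩ hKc.isComplete hK c
  have hobtuse := (norm_eq_iInf_iff_real_inner_le_zero hK hpK).1 hp
  have hlimp : Tendsto (fun k => ⟪s (φ k) - p, c - p⟫) atTop (𝓝 ⟪c - p, c - p⟫) := by
    simpa only [inner_sub_left] using (hlim (c - p)).sub (tendsto_const_nhds (x := ⟪p, c - p⟫))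
  have hle : ⟪c - p, c - p⟫ ≤ 0 :=
    le_of_tendsto' hlimp fun k => by rw [real_inner_comm]; exact hobtuse _ (hs _)
  rw [real_inner_self_nonpos, sub_eq_zero] at hle
  exact hle ▸ hpK

end WeakClusterPoints

theorem DR_dynamic_properties_general
    [NormedAddCommGroup X] [InnerProductSpace ℝ X] [CompleteSpace X]
    (U : Submodule ℝ X) [U.HasOrthogonalProjection]
    (g : X → EReal) (hgproper : EProper g) (hgconv : EConvexOn g)
    (prox : X → X) (hprox : IsProx g prox)
    (PU RU Q T : X → X)
    (hPU : ∀ z, PU z = (U.orthogonalProjectionOnto z : X))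
    (hRU : ∀ z, RU z = 2 • PU z - z)
    (hQ : ∀ z, Q z = z - PU z)
    (hT : ∀ z, T z = z - PU z + prox (RU z))
    (v : X)
    (hv : IsMetricProj (closure (Set.range fun z => z - T z)) 0 v)
    (hvU : v ∈ Uᗮ)
    (F : Set X) (hF : F = {z | z = T (z + v)}) (hFne : F.Nonempty)
    (x : X) :
    -- (i)
    ((∀ n : ℕ, PU (T^[n] x) - prox (RU (T^[n] x)) = T^[n] x - T^[n+1] x) ∧
      Tendsto (fun n : ℕ => T^[n] x - T^[n+1] x) atTop (𝓝 v)) ∧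
    -- (ii)
    Tendsto (fun n : ℕ => PU (T^[n] x) - PU (T^[n+1] x)) atTop (𝓝 0) ∧
    -- (iii)
    ((∀ n : ℕ, -(Q (prox (RU (T^[n] x)))) = Q (T^[n] x) - Q (T^[n+1] x)) ∧
      Tendsto (fun n : ℕ => Q (T^[n] x) - Q (T^[n+1] x)) atTop (𝓝 v)) ∧
    -- (iv)
    (∀ c : X, IsWeakClusterPt (fun n : ℕ => PU (T^[n] x)) c →
      c ∈ U ∧ c - v ∈ closure {z : X | g z ≠ ⊤}) ∧
    -- (v)
    (∃ M : ℝ, ∀ n : ℕ, ‖(n : ℝ) • v + T^[n] x‖ ≤ M) ∧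
    (∃ M : ℝ, ∀ n : ℕ, ‖PU (T^[n] x)‖ ≤ M) ∧
    (∃ M : ℝ, ∀ n : ℕ, ‖prox (RU (T^[n] x))‖ ≤ M) := by
  obtain ⟨z, hz⟩ := hF ▸ hFne
  obtain rfl : PU = U.starProjection := funext hPU
  obtain rfl : RU = fun z => 2 • U.starProjection z - z := funext hRU
  obtain rfl : Q = fun z => z - U.starProjection z := funext hQ
  obtain rfl : T = douglasRachford U prox := funext hT
  beta_reduce
  set P := U.starProjection
  set T := douglasRachford U prox
  have hTfne : FirmlyNonexpansive T :=
    firmlyNonexpansive_douglasRachford U (hprox.firmlyNonexpansive hgproper hgconv)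
  have hmin : ∀ w, 0 ≤ ⟪w - T w - v, v⟫ := fun w => hv.inner_sub_nonneg ⟨w, rfl⟩
  have hy : T (z + v) = z + v - v := by rw [add_sub_cancel_right]; exact hz.symm
  have hdiff : ∀ n, P (T^[n] x) - prox (2 • P (T^[n] x) - T^[n] x) = T^[n] x - T^[n + 1] x :=
    fun n => by rw [Function.iterate_succ_apply', sub_douglasRachford]
  have he := hTfne.tendsto_iterate_sub_iterate_succ hmin hy x
  have hPe : Tendsto (fun n => P (T^[n] x - T^[n + 1] x)) atTop (𝓝 0) :=
    U.starProjection_apply_eq_zero_iff.mpr hvU ▸ (P.continuous.tendsto v).comp he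
  obtain ⟨B, hB⟩ : ∃ B, ∀ n : ℕ, ‖(n : ℝ) • v + T^[n] x‖ ≤ B :=
    ⟨_, hTfne.norm_smul_add_iterate_le hmin hy x⟩
  have hPbound : ∀ n, ‖P (T^[n] x)‖ ≤ B := fun n =>
    (U.norm_starProjection_le_norm_smul_add hvU _ _).trans (hB n)
  obtain ⟨Me, hMe⟩ := he.norm.bddAbove_range
  refine ⟨⟨hdiff, he⟩, by simpa using hPe, ⟨fun n => ?_, ?_⟩, fun c hc => ⟨?_, ?_⟩,
    ⟨B, hB⟩, ⟨B, hPbound⟩, ⟨B + Me, fun n => ?_⟩⟩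
  · rw [Function.iterate_succ_apply', sub_starProjection_sub_douglasRachford]
  · simpa [sub_sub_sub_comm] using he.sub hPe
  · exact hc.mem_of_forall_mem U.convex (U.orthogonal_orthogonal ▸ Uᗮ.isClosed_orthogonal)
      fun n => U.starProjection_apply_mem _
  · exact (hc.sub_of_tendsto_sub (he.congr fun n => (hdiff n).symm)).mem_of_forall_mem
      ((hgconv.convex_dom hgproper.1).closure) isClosed_closure
      fun n => subset_closure (hprox.apply_ne_top hgproper _)
  · rw [← sub_sub_cancel (P (T^[n] x)) (prox _), hdiff]
    exact (norm_sub_le _ _).trans (add_le_add (hPbound n) (hMe ⟨n, rfl⟩))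

/-- Basic dynamic properties of the Douglas–Rachford iteration
`T = Id − P_U + Prox_g ∘ R_U` with minimal displacement vector `v ∈ U^⊥` and
`F = {z : z = T(z + v)}` nonempty. Here `Q = Id − P_U` is the projector onto `U^⊥`. -/
theorem DR_dynamic_properties
    [NormedAddCommGroup X] [InnerProductSpace ℝ X] [CompleteSpace X]
    (U : Submodule ℝ X) (hUclosed : IsClosed (U : Set X)) [U.HasOrthogonalProjection]
    (g : X → EReal) (hgproper : EProper g) (hglsc : LowerSemicontinuous g)
    (hgconv : EConvexOn g)
    (prox : X → X) (hprox : IsProx g prox)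
    (PU RU Q T : X → X)
    (hPU : ∀ z, PU z = (U.orthogonalProjectionOnto z : X))
    (hRU : ∀ z, RU z = 2 • PU z - z)
    (hQ : ∀ z, Q z = z - PU z)
    (hT : ∀ z, T z = z - PU z + prox (RU z))
    (v : X)
    (hv : IsMetricProj (closure (Set.range fun z => z - T z)) 0 v)
    (hvU : v ∈ Uᗮ)
    (F : Set X) (hF : F = {z | z = T (z + v)}) (hFne : F.Nonempty)
    (x : X) :
    -- (i)
    ((∀ n : ℕ, PU (T^[n] x) - prox (RU (T^[n] x)) = T^[n] x - T^[n+1] x) ∧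
      Tendsto (fun n : ℕ => T^[n] x - T^[n+1] x) atTop (𝓝 v)) ∧
    -- (ii)
    Tendsto (fun n : ℕ => PU (T^[n] x) - PU (T^[n+1] x)) atTop (𝓝 0) ∧
    -- (iii)
    ((∀ n : ℕ, -(Q (prox (RU (T^[n] x)))) = Q (T^[n] x) - Q (T^[n+1] x)) ∧
      Tendsto (fun n : ℕ => Q (T^[n] x) - Q (T^[n+1] x)) atTop (𝓝 v)) ∧
    -- (iv)
    (∀ c : X, IsWeakClusterPt (fun n : ℕ => PU (T^[n] x)) c →
      c ∈ U ∧ c - v ∈ closure {z : X | g z ≠ ⊤}) ∧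
    -- (v)
    (∃ M : ℝ, ∀ n : ℕ, ‖(n : ℝ) • v + T^[n] x‖ ≤ M) ∧
    (∃ M : ℝ, ∀ n : ℕ, ‖PU (T^[n] x)‖ ≤ M) ∧
    (∃ M : ℝ, ∀ n : ℕ, ‖prox (RU (T^[n] x))‖ ≤ M) :=
  DR_dynamic_properties_general U g hgproper hgconv prox hprox PU RU Q T hPU hRU hQ hT v hv hvU F hF
    hFne x
end
end
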